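/- Let X be a proper geodesic δ-hyperbolic space, let b ∈ 𝔅̂(X), suppose X is K-roughly starlike from the basepoint ω_b of b, and suppose ε > 0 is such that ρ_{ε,b} is a GH-density with constant M. Then there exists 0 < λ < 1 depending only on δ, K, ε, M such that for any x ∈ X and any y, z in the open ball of radius λ·d_{ε,b}(x) around x in the metric d_{ε,b} (where d_{ε,b}(x) denotes the distance from x to the metric boundary of X_{ε,b}), one has d(y,z) ≤ 1 and C⁻¹·d_{ε,b}(x)·d(y,z) ≤ d_{ε,b}(y,z) ≤ C·d_{ε,b}(x)·d(y,z), with C depending only on δ, K, ε, M. -/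

import Mathlib

open Metric Set Filter Topology
open scoped ENNReal Classical

noncomputable section

namespace Paper

variable {X Y : Type*}

/-- The distance function of a metric space. -/
def distFun (X : Type*) [MetricSpace X] : X → X → ℝ := fun p q => dist p q

/-- `e` is a genuine metric distance function. -/
def IsMetricDist (e : X → X → ℝ) : Prop :=
  (∀ x, e x x = 0) ∧ (∀ x y, x ≠ y → 0 < e x y) ∧ (∀ x y, e x y = e y x) ∧
    ∀ x y z, e x z ≤ e x y + e y z

/-- Cauchy sequence with respect to the distance function `e`. -/
def CauchyWrt (e : X → X → ℝ) (u : ℕ → X) : Prop :=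
  ∀ δ : ℝ, 0 < δ → ∃ N : ℕ, ∀ m, N ≤ m → ∀ n, N ≤ n → e (u m) (u n) < δ

/-- The sequence converges, w.r.t. `e`, to a point of the space. -/
def ConvWrt (e : X → X → ℝ) (u : ℕ → X) : Prop :=
  ∃ y : X, Tendsto (fun n => e (u n) y) atTop (𝓝 0)

/-- The space is incomplete with respect to `e`:
some Cauchy sequence does not converge in the space. -/
def IncompleteWrt (e : X → X → ℝ) : Prop :=
  ∃ u : ℕ → X, CauchyWrt e u ∧ ¬ ConvWrt e u

/-- Distance from `x` to the metric boundary (the completion minus the space),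
measured w.r.t. `e`: the infimum of the limits `lim_n e x (u n)` over all Cauchy
sequences `u` that have no limit in the space. -/
def bdryDistWrt (e : X → X → ℝ) (x : X) : ℝ :=
  sInf { r : ℝ | ∃ u : ℕ → X, CauchyWrt e u ∧ ¬ ConvWrt e u ∧
    Tendsto (fun n => e x (u n)) atTop (𝓝 r) }

/-- Sequential compactness of a set w.r.t. `e`. -/
def SeqCompactWrt (e : X → X → ℝ) (s : Set X) : Prop :=
  ∀ u : ℕ → X, (∀ n, u n ∈ s) → ∃ y ∈ s, ∃ φ : ℕ → ℕ, StrictMono φ ∧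
    Tendsto (fun n => e (u (φ n)) y) atTop (𝓝 0)

/-- Local compactness w.r.t. `e`: every point has arbitrarily small compact closed balls. -/
def LocallyCompactWrt (e : X → X → ℝ) : Prop :=
  ∀ x : X, ∀ r : ℝ, 0 < r → ∃ r' : ℝ, 0 < r' ∧ r' ≤ r ∧ SeqCompactWrt e { y | e x y ≤ r' }

/-- Continuity of a curve on a set of parameters, w.r.t. `e`. -/
def ContinuousOnWrt (e : X → X → ℝ) (γ : ℝ → X) (I : Set ℝ) : Prop :=
  ∀ t ∈ I, ∀ δ : ℝ, 0 < δ → ∃ η : ℝ, 0 < η ∧ ∀ s ∈ I, |s - t| < η → e (γ s) (γ t) < δ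

/-- The length (total variation) of the curve `γ` on the parameter set `I`, w.r.t. `e`. -/
def varOn (e : X → X → ℝ) (γ : ℝ → X) (I : Set ℝ) : ℝ≥0∞ :=
  ⨆ p : ℕ × { u : ℕ → ℝ // Monotone u ∧ ∀ i, u i ∈ I },
    ∑ i ∈ Finset.range p.1, ENNReal.ofReal (e (γ (p.2.1 (i + 1))) (γ (p.2.1 i)))

/-- `X` with distance `e` is an `A`-uniform metric space: it is a locally compact,
incomplete metric space any two of whose points are joined by an `A`-uniform curve. -/
def IsUniformSpcWrt (e : X → X → ℝ) (A : ℝ) : Prop :=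
  IsMetricDist e ∧ LocallyCompactWrt e ∧ IncompleteWrt e ∧
  ∀ x y : X, ∃ (a b : ℝ) (γ : ℝ → X), a ≤ b ∧ ContinuousOnWrt e γ (Icc a b) ∧
    γ a = x ∧ γ b = y ∧
    varOn e γ (Icc a b) ≤ ENNReal.ofReal (A * e x y) ∧
    ∀ t ∈ Icc a b, min (varOn e γ (Icc a t)) (varOn e γ (Icc t b)) ≤
      ENNReal.ofReal (A * bdryDistWrt e (γ t))

/-- `f` is `∂`-Lipschitz with data `(L, lam)`. -/
def PartialLipschitzWrt (e : X → X → ℝ) (e' : Y → Y → ℝ) (L lam : ℝ) (f : X → Y) : Prop :=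
  ∀ x y z : X, e y x < lam * bdryDistWrt e x → e z x < lam * bdryDistWrt e x →
    e' (f y) (f z) / bdryDistWrt e' (f x) ≤ L * (e y z / bdryDistWrt e x)

/-- `f` (with inverse `g`) is `∂`-biLipschitz with data `(L, lam)`. -/
def PartialBiLipschitzWrt (e : X → X → ℝ) (e' : Y → Y → ℝ) (L lam : ℝ)
    (f : X → Y) (g : Y → X) : Prop :=
  1 ≤ L ∧ Function.LeftInverse g f ∧ Function.RightInverse g f ∧
    PartialLipschitzWrt e e' L lam f ∧ PartialLipschitzWrt e' e L lam g

/-- Cross-ratio of a quadruple of points, w.r.t. `e`. -/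
def crossRatioWrt (e : X → X → ℝ) (x y z w : X) : ℝ := e x z * e y w / (e x y * e z w)

/-- `f` is `η`-quasimöbius. -/
def QuasiMobiusWrt (e : X → X → ℝ) (e' : Y → Y → ℝ) (η : ℝ → ℝ) (f : X → Y) : Prop :=
  ∀ x y z w : X, x ≠ y → x ≠ z → x ≠ w → y ≠ z → y ≠ w → z ≠ w →
    crossRatioWrt e' (f x) (f y) (f z) (f w) ≤ η (crossRatioWrt e x y z w)

/-- `f` is `η`-quasisymmetric. -/
def QuasiSymmetricWrt (e : X → X → ℝ) (e' : Y → Y → ℝ) (η : ℝ → ℝ) (f : X → Y) : Prop :=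
  ∀ x y z : X, ∀ t : ℝ, 0 ≤ t → e x y ≤ t * e x z → e' (f x) (f y) ≤ η t * e' (f x) (f z)

/-- `η` is (the restriction to `[0,∞)` of) a self-homeomorphism of `[0,∞)`:
continuous, strictly increasing, fixing `0`, and tending to `∞`. -/
def IsControlFun (η : ℝ → ℝ) : Prop :=
  ContinuousOn η (Ici 0) ∧ StrictMonoOn η (Ici 0) ∧ η 0 = 0 ∧ Tendsto η atTop atTop

/-- The conformal deformation distance with conformal factor `ρ`: the infimum of
`∫ ρ ∘ γ` over all `1`-Lipschitz (w.r.t. `e`) curves joining `x` to `y`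
(equivalently, the infimum of `∫_γ ρ ds` over all rectifiable curves joining `x` to `y`). -/
def confDistWrt (e : X → X → ℝ) (ρ : X → ℝ) (x y : X) : ℝ :=
  sInf { l : ℝ | ∃ (T : ℝ) (γ : ℝ → X), 0 ≤ T ∧
    (∀ s ∈ Icc 0 T, ∀ t ∈ Icc 0 T, e (γ s) (γ t) ≤ |s - t|) ∧
    γ 0 = x ∧ γ T = y ∧ l = ∫ t in (0:ℝ)..T, ρ (γ t) }

/-- The quasihyperbolic metric of the space with distance `e`. -/
def quasiHypWrt (e : X → X → ℝ) : X → X → ℝ :=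
  confDistWrt e fun z => (bdryDistWrt e z)⁻¹

/-- `γ` is a geodesic segment from `x` to `y`, parametrized by arclength on `[0, e x y]`. -/
def IsGeodesicSegWrt (e : X → X → ℝ) (γ : ℝ → X) (x y : X) : Prop :=
  γ 0 = x ∧ γ (e x y) = y ∧
    ∀ s ∈ Icc 0 (e x y), ∀ t ∈ Icc 0 (e x y), e (γ s) (γ t) = |s - t|

/-- Any two points are joined by a geodesic. -/
def GeodesicSpaceWrt (e : X → X → ℝ) : Prop := ∀ x y : X, ∃ γ : ℝ → X, IsGeodesicSegWrt e γ x y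

/-- The image of a geodesic segment. -/
def segImageWrt (e : X → X → ℝ) (γ : ℝ → X) (x y : X) : Set X := γ '' Icc 0 (e x y)

/-- `δ`-hyperbolicity: every geodesic triangle is `δ`-thin. -/
def DeltaHyperbolicWrt (e : X → X → ℝ) (δ : ℝ) : Prop :=
  ∀ (x y z : X) (γ₁ γ₂ γ₃ : ℝ → X),
    IsGeodesicSegWrt e γ₁ x y → IsGeodesicSegWrt e γ₂ y z → IsGeodesicSegWrt e γ₃ z x →
    (∀ p ∈ segImageWrt e γ₁ x y, ∃ q ∈ segImageWrt e γ₂ y z ∪ segImageWrt e γ₃ z x, e p q ≤ δ) ∧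
    (∀ p ∈ segImageWrt e γ₂ y z, ∃ q ∈ segImageWrt e γ₁ x y ∪ segImageWrt e γ₃ z x, e p q ≤ δ) ∧
    (∀ p ∈ segImageWrt e γ₃ z x, ∃ q ∈ segImageWrt e γ₁ x y ∪ segImageWrt e γ₂ y z, e p q ≤ δ)

/-- `γ` is a geodesic ray (defined on `[0,∞)`). -/
def IsGeodesicRayWrt (e : X → X → ℝ) (γ : ℝ → X) : Prop :=
  ∀ s ∈ Ici (0:ℝ), ∀ t ∈ Ici (0:ℝ), e (γ s) (γ t) = |s - t|

/-- `γ` is a geodesic line. -/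
def IsGeodesicLineWrt (e : X → X → ℝ) (γ : ℝ → X) : Prop :=
  ∀ s t : ℝ, e (γ s) (γ t) = |s - t|

/-- Two rays are at bounded distance from each other (represent the same
point of the Gromov boundary). -/
def RayEquivWrt (e : X → X → ℝ) (γ σ : ℝ → X) : Prop :=
  ∃ c : ℝ, ∀ t ∈ Ici (0:ℝ), e (γ t) (σ t) ≤ c

/-- The infimal distance from `x` to the set `s`, w.r.t. `e`. -/
def infDistWrt (e : X → X → ℝ) (x : X) (s : Set X) : ℝ := sInf (e x '' s)

/-- `X` is `K`-roughly starlike from the point `z`. -/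
def RoughStarlikeFromPointWrt (e : X → X → ℝ) (K : ℝ) (z : X) : Prop :=
  ∀ x : X, ∃ γ : ℝ → X, IsGeodesicRayWrt e γ ∧ γ 0 = z ∧ infDistWrt e x (γ '' Ici 0) ≤ K

/-- `X` is `K`-roughly starlike from the Gromov boundary point represented by the
geodesic ray `ρ`: every point lies within distance `K` of a geodesic line starting
from that boundary point. -/
def RoughStarlikeFromRayWrt (e : X → X → ℝ) (K : ℝ) (ρ : ℝ → X) : Prop :=
  ∀ x : X, ∃ γ : ℝ → X, IsGeodesicLineWrt e γ ∧ RayEquivWrt e (fun t => γ (-t)) ρ ∧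
    infDistWrt e x (range γ) ≤ K

/-- The Busemann function of the geodesic ray `ρ`:
`b_ρ(x) = lim_{t→∞} (e (ρ t) x - t) = inf_{t ≥ 0} (e (ρ t) x - t)`. -/
def busemannWrt (e : X → X → ℝ) (ρ : ℝ → X) (x : X) : ℝ :=
  sInf ((fun t => e (ρ t) x - t) '' Ici 0)

/-- `b ∈ 𝔅̂(X)` (either a translated distance function or a translated Busemann
function), and `X` is `K`-roughly starlike from the basepoint of `b`. -/
def BhatStarlike (e : X → X → ℝ) (K : ℝ) (b : X → ℝ) : Prop :=
  (∃ (z : X) (s : ℝ), (∀ x, b x = e x z + s) ∧ RoughStarlikeFromPointWrt e K z) ∨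
  (∃ (ρ : ℝ → X) (s : ℝ), IsGeodesicRayWrt e ρ ∧ (∀ x, b x = busemannWrt e ρ x + s) ∧
    RoughStarlikeFromRayWrt e K ρ)

/-- `ρ` is a Gehring–Hayman density with constant `M`: the `ρ`-length of any geodesic
is at most `M` times the conformal distance between its endpoints. -/
def IsGHDensityWrt (e : X → X → ℝ) (M : ℝ) (ρ : X → ℝ) : Prop :=
  ∀ (x y : X) (γ : ℝ → X), IsGeodesicSegWrt e γ x y →
    (∫ t in (0:ℝ)..(e x y), ρ (γ t)) ≤ M * confDistWrt e ρ x y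

/-- The density `ρ_{ε,b}(x) = e^{-ε b(x)}`. -/
def uniformizationDensity (b : X → ℝ) (ε : ℝ) : X → ℝ := fun x => Real.exp (-ε * b x)

/-- The Gromov product of `x` and `y` based at `z`. -/
def gromovProdWrt (e : X → X → ℝ) (z x y : X) : ℝ := (e x z + e y z - e x y) / 2

/-- The sequence `u` represents the Gromov boundary point of the geodesic ray `ρ`
(with respect to the basepoint `z`). -/
def SeqRepWrt (e : X → X → ℝ) (z : X) (ρ : ℝ → X) (u : ℕ → X) : Prop :=
  Tendsto (fun n => gromovProdWrt e z (u n) (ρ n)) atTop atTop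

/-- The Gromov product, based at `z`, of the two boundary points represented by the
geodesic rays `ρ` and `σ` (valued in `[0,∞]`). -/
def bGromovProdWrt (e : X → X → ℝ) (z : X) (ρ σ : ℝ → X) : ℝ≥0∞ :=
  ⨅ (u : { u : ℕ → X // SeqRepWrt e z ρ u }) (v : { v : ℕ → X // SeqRepWrt e z σ v }),
    Filter.liminf (fun n => ENNReal.ofReal (gromovProdWrt e z (u.1 n) (v.1 n))) atTop

/-- `S(x) = sup_{ω ∈ ∂X} inf_{ξ ∈ ∂X} (ω|ξ)_x`. -/
def Sfun (e : X → X → ℝ) (x : X) : ℝ≥0∞ :=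
  ⨆ (ω : { ρ : ℝ → X // IsGeodesicRayWrt e ρ }),
    ⨅ (ξ : { ρ : ℝ → X // IsGeodesicRayWrt e ρ }), bGromovProdWrt e x ω.1 ξ.1

/-- The filter at the left end of the interval `I`. -/
def leftEndFilter (I : Set ℝ) : Filter ℝ :=
  if BddBelow I then 𝓝[I] (sInf I) else atBot ⊓ 𝓟 I

/-- The filter at the right end of the interval `I`. -/
def rightEndFilter (I : Set ℝ) : Filter ℝ :=
  if BddAbove I then 𝓝[I] (sSup I) else atTop ⊓ 𝓟 I

/-- `γ : I → Ω` is an `A`-uniform curve: it is rectifiable with endpoints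
`γ₋, γ₊` in the completion `Ω̄` satisfying `ℓ(γ) ≤ A d(γ₋,γ₊)` (or non-rectifiable with
`d(γ(s),γ(t)) → ∞` towards the endpoints of `I`), and at every time `t` the shorter of
the two subcurves has length at most `A d_Ω(γ(t))`. -/
def IsUniformCurve {Ω : Type*} [MetricSpace Ω] (A : ℝ) (γ : ℝ → Ω) (I : Set ℝ) : Prop :=
  I.Nonempty ∧ I.OrdConnected ∧ ContinuousOn γ I ∧
  ((varOn (distFun Ω) γ I ≠ ⊤ ∧
     ∃ gm gp : UniformSpace.Completion Ω,
       Tendsto (fun t => (γ t : UniformSpace.Completion Ω)) (leftEndFilter I) (𝓝 gm) ∧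
       Tendsto (fun t => (γ t : UniformSpace.Completion Ω)) (rightEndFilter I) (𝓝 gp) ∧
       varOn (distFun Ω) γ I ≤ ENNReal.ofReal (A * dist gm gp)) ∨
   (varOn (distFun Ω) γ I = ⊤ ∧
     Tendsto (fun pq : ℝ × ℝ => dist (γ pq.1) (γ pq.2))
       (leftEndFilter I ×ˢ rightEndFilter I) atTop)) ∧
  ∀ t ∈ I, min (varOn (distFun Ω) γ (I ∩ Iic t)) (varOn (distFun Ω) γ (I ∩ Ici t)) ≤
    ENNReal.ofReal (A * bdryDistWrt (distFun Ω) (γ t))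


/-!
Write `ρ = e^{-εb}` and `d_ε` for the conformal distance. Since `b` is `1`-Lipschitz, `ρ`
changes by a factor at most `e^{εr}` over distance `r`, so `d_ε(y, z) ≍ ρ(y) d(y, z)` when
`d(y, z) ≤ 1`, and any curve leaving the unit ball about `y` has `ρ`-length at least
`e^{-ε} ρ(y)`. By properness, a `d_ε`-Cauchy sequence without limit eventually leaves every unit
ball, whence `d_ε(x) ≥ e^{-ε} ρ(x)`. Conversely, rough starlikeness and thin triangles give a
geodesic ray starting within `K + 1` of `x` along which `b` grows at unit speed up to `4δ`; `ρ`
decays exponentially along it, so the ray escapes to the metric boundary at `d_ε`-distance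
`≲ ρ(x)`, and `d_ε(x) ≍ ρ(x)`. Hence the `d_ε`-ball of radius `λ d_ε(x)` lies in the `d`-ball of
radius `1/2` about `x`, on which `ρ ≍ ρ(x) ≍ d_ε(x)`.
-/

open scoped NNReal Pointwise
open Real

section ConformalDistance

variable [MetricSpace X] {ρ : X → ℝ}

@[simp] lemma distFun_apply (p q : X) : distFun X p q = dist p q := rfl

lemma forall_dist_le_abs_iff_lipschitzOnWith {γ : ℝ → X} {I : Set ℝ} :
    (∀ s ∈ I, ∀ t ∈ I, dist (γ s) (γ t) ≤ |s - t|) ↔ LipschitzOnWith 1 γ I := by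
  simp [lipschitzOnWith_iff_dist_le_mul, Real.dist_eq]

lemma LipschitzOnWith.Icc_union_Icc {f : ℝ → X} {K : ℝ≥0} {a b c : ℝ}
    (h₁ : LipschitzOnWith K f (Icc a b)) (h₂ : LipschitzOnWith K f (Icc b c)) :
    LipschitzOnWith K f (Icc a c) := by
  rw [lipschitzOnWith_iff_dist_le_mul] at *
  have key : ∀ s ∈ Icc a c, ∀ t ∈ Icc a c, s ≤ t → dist (f s) (f t) ≤ K * dist s t := by
    intro s hs t ht hst
    rcases le_total t b with htb | hbt
    · exact h₁ s ⟨hs.1, hst.trans htb⟩ t ⟨ht.1, htb⟩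
    rcases le_total b s with hbs | hsb
    · exact h₂ s ⟨hbs, hs.2⟩ t ⟨hbt, ht.2⟩
    calc dist (f s) (f t) ≤ dist (f s) (f b) + dist (f b) (f t) := dist_triangle _ _ _
      _ ≤ K * dist s b + K * dist b t :=
        add_le_add (h₁ s ⟨hs.1, hsb⟩ b ⟨hs.1.trans hsb, le_rfl⟩)
          (h₂ b ⟨le_rfl, hbt.trans ht.2⟩ t ⟨hbt, ht.2⟩)
      _ = K * dist s t := by
        rw [Real.dist_eq, Real.dist_eq, Real.dist_eq, abs_of_nonpos (by linarith),
          abs_of_nonpos (by linarith), abs_of_nonpos (by linarith)]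
        ring
  intro s hs t ht
  rcases le_total s t with hst | hts
  · exact key s hs t ht hst
  · rw [dist_comm, dist_comm s]
    exact key t ht s hs hts

lemma IsGeodesicSegWrt.dist_left {γ : ℝ → X} {x y : X} (h : IsGeodesicSegWrt (distFun X) γ x y)
    {s : ℝ} (hs : s ∈ Icc 0 (dist x y)) : dist x (γ s) = s := by
  have := h.2.2 0 ⟨le_rfl, dist_nonneg⟩ s hs
  rw [distFun_apply, h.1, abs_of_nonpos (by linarith [hs.1])] at this
  linarith

lemma IsGeodesicSegWrt.apply_dist {γ : ℝ → X} {x y : X}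
    (h : IsGeodesicSegWrt (distFun X) γ x y) : γ (dist x y) = y :=
  h.2.1

lemma IsGeodesicSegWrt.lipschitzOnWith {γ : ℝ → X} {x y : X}
    (h : IsGeodesicSegWrt (distFun X) γ x y) : LipschitzOnWith 1 γ (Icc 0 (dist x y)) :=
  forall_dist_le_abs_iff_lipschitzOnWith.1 fun s hs t ht => (h.2.2 s hs t ht).le

def confLengths (ρ : X → ℝ) (x y : X) : Set ℝ :=
  { l : ℝ | ∃ (T : ℝ) (γ : ℝ → X), 0 ≤ T ∧ LipschitzOnWith 1 γ (Icc 0 T) ∧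
    γ 0 = x ∧ γ T = y ∧ l = ∫ t in (0:ℝ)..T, ρ (γ t) }

lemma confDistWrt_eq_sInf (ρ : X → ℝ) (x y : X) :
    confDistWrt (distFun X) ρ x y = sInf (confLengths ρ x y) := by
  simp only [confDistWrt, confLengths, distFun_apply, forall_dist_le_abs_iff_lipschitzOnWith]

lemma confLengths_nonempty (hX : GeodesicSpaceWrt (distFun X)) (ρ : X → ℝ) (x y : X) :
    (confLengths ρ x y).Nonempty := by
  obtain ⟨γ, hγ⟩ := hX x y
  exact ⟨_, dist x y, γ, dist_nonneg, hγ.lipschitzOnWith, hγ.1, hγ.apply_dist, rfl⟩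

lemma nonneg_of_mem_confLengths (hρ : ∀ p, 0 ≤ ρ p) {x y : X} {l : ℝ}
    (hl : l ∈ confLengths ρ x y) : 0 ≤ l := by
  obtain ⟨T, γ, hT, -, -, -, rfl⟩ := hl
  exact intervalIntegral.integral_nonneg hT fun t _ => hρ _

lemma confLengths_bddBelow (hρ : ∀ p, 0 ≤ ρ p) (x y : X) : BddBelow (confLengths ρ x y) :=
  ⟨0, fun _ hl => nonneg_of_mem_confLengths hρ hl⟩

lemma confDistWrt_nonneg (hρ : ∀ p, 0 ≤ ρ p) (x y : X) : 0 ≤ confDistWrt (distFun X) ρ x y := by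
  rw [confDistWrt_eq_sInf]
  exact Real.sInf_nonneg fun _ hl => nonneg_of_mem_confLengths hρ hl

lemma confDistWrt_le_integral (hρ : ∀ p, 0 ≤ ρ p) {T : ℝ} {γ : ℝ → X} (hT : 0 ≤ T)
    (hγ : LipschitzOnWith 1 γ (Icc 0 T)) :
    confDistWrt (distFun X) ρ (γ 0) (γ T) ≤ ∫ t in (0:ℝ)..T, ρ (γ t) := by
  rw [confDistWrt_eq_sInf]
  exact csInf_le (confLengths_bddBelow hρ _ _) ⟨T, γ, hT, hγ, rfl, rfl, rfl⟩

lemma confLengths_comm (x y : X) : confLengths ρ x y = confLengths ρ y x := by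
  have key : ∀ x y : X, confLengths ρ x y ⊆ confLengths ρ y x := by
    rintro x y _ ⟨T, γ, hT, hγ, rfl, rfl, rfl⟩
    refine ⟨T, fun t => γ (T - t), hT, ?_, by simp, by simp, ?_⟩
    · rw [← forall_dist_le_abs_iff_lipschitzOnWith] at hγ ⊢
      intro s hs t ht
      have := hγ (T - s) ⟨by linarith [hs.2], by linarith [hs.1]⟩
        (T - t) ⟨by linarith [ht.2], by linarith [ht.1]⟩
      rwa [sub_sub_sub_cancel_left, abs_sub_comm] at this
    · rw [intervalIntegral.integral_comp_sub_left (fun t => ρ (γ t)) T]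
      simp
  exact (key x y).antisymm (key y x)

lemma confDistWrt_comm (x y : X) :
    confDistWrt (distFun X) ρ x y = confDistWrt (distFun X) ρ y x := by
  rw [confDistWrt_eq_sInf, confDistWrt_eq_sInf, confLengths_comm]

lemma confLengths_add_subset (hρ : Continuous ρ) (x y z : X) :
    confLengths ρ x y + confLengths ρ y z ⊆ confLengths ρ x z := by
  rintro _ ⟨_, ⟨T₁, γ₁, hT₁, hγ₁, rfl, rfl, rfl⟩, _, ⟨T₂, γ₂, hT₂, hγ₂, hy, rfl, rfl⟩, rfl⟩
  set γ : ℝ → X := fun t => if t ≤ T₁ then γ₁ t else γ₂ (t - T₁)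
  have h₁ : EqOn γ γ₁ (Icc 0 T₁) := fun t ht => if_pos ht.2
  have h₂ : EqOn γ (fun t => γ₂ (t - T₁)) (Icc T₁ (T₁ + T₂)) := by
    intro t ht
    rcases ht.1.eq_or_lt with rfl | h
    · simp [γ, hy]
    · simp [γ, h.not_ge]
  have hγ₂' : LipschitzOnWith 1 (fun t => γ₂ (t - T₁)) (Icc T₁ (T₁ + T₂)) := by
    rw [← forall_dist_le_abs_iff_lipschitzOnWith] at hγ₂ ⊢
    intro s hs t ht
    have := hγ₂ (s - T₁) ⟨by linarith [hs.1], by linarith [hs.2]⟩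
      (t - T₁) ⟨by linarith [ht.1], by linarith [ht.2]⟩
    rwa [sub_sub_sub_cancel_right] at this
  have hγ : LipschitzOnWith 1 γ (Icc 0 (T₁ + T₂)) :=
    LipschitzOnWith.Icc_union_Icc (fun s hs t ht => by rw [h₁ hs, h₁ ht]; exact hγ₁ hs ht)
      (fun s hs t ht => by rw [h₂ hs, h₂ ht]; exact hγ₂' hs ht)
  have hcont : ContinuousOn (fun t => ρ (γ t)) (Icc 0 (T₁ + T₂)) :=
    hρ.comp_continuousOn hγ.continuousOn
  refine ⟨T₁ + T₂, γ, by linarith, hγ, h₁ ⟨le_rfl, hT₁⟩,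
    (h₂ ⟨by linarith, le_rfl⟩).trans (by simp), ?_⟩
  symm
  rw [← intervalIntegral.integral_add_adjacent_intervals (b := T₁)
    ((hcont.mono (Icc_subset_Icc le_rfl (by linarith))).intervalIntegrable_of_Icc hT₁)
    ((hcont.mono (Icc_subset_Icc hT₁ le_rfl)).intervalIntegrable_of_Icc (by linarith))]
  congr 1
  · exact intervalIntegral.integral_congr
      (by rw [uIcc_of_le hT₁]; exact fun t ht => congrArg ρ (h₁ ht))
  · rw [intervalIntegral.integral_congr (g := fun t => ρ (γ₂ (t - T₁)))
      (by rw [uIcc_of_le (by linarith)]; exact fun t ht => congrArg ρ (h₂ ht)),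
      intervalIntegral.integral_comp_sub_right (fun t => ρ (γ₂ t))]
    simp

lemma confDistWrt_triangle (hX : GeodesicSpaceWrt (distFun X)) (hρ₀ : ∀ p, 0 ≤ ρ p)
    (hρ : Continuous ρ) (x y z : X) :
    confDistWrt (distFun X) ρ x z ≤
      confDistWrt (distFun X) ρ x y + confDistWrt (distFun X) ρ y z := by
  simp only [confDistWrt_eq_sInf]
  rw [← csInf_add (confLengths_nonempty hX ρ x y) (confLengths_bddBelow hρ₀ x y)
    (confLengths_nonempty hX ρ y z) (confLengths_bddBelow hρ₀ y z)]
  exact csInf_le_csInf (confLengths_bddBelow hρ₀ x z)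
    ((confLengths_nonempty hX ρ x y).add (confLengths_nonempty hX ρ y z))
    (confLengths_add_subset hρ x y z)

lemma confDistWrt_le_mul_dist (hX : GeodesicSpaceWrt (distFun X)) (hρ : ∀ p, 0 ≤ ρ p)
    {x y : X} {c : ℝ} (hc : ∀ p, dist x p ≤ dist x y → ρ p ≤ c) :
    confDistWrt (distFun X) ρ x y ≤ c * dist x y := by
  obtain ⟨γ, hγ⟩ := hX x y
  have hle := confDistWrt_le_integral hρ dist_nonneg hγ.lipschitzOnWith
  rw [hγ.1, hγ.apply_dist] at hle
  refine hle.trans ((le_abs_self _).trans ?_)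
  have := intervalIntegral.norm_integral_le_of_norm_le_const (a := 0) (b := dist x y)
    (f := fun t => ρ (γ t)) (C := c) fun t ht => by
      rw [uIoc_of_le dist_nonneg] at ht
      rw [Real.norm_eq_abs, abs_of_nonneg (hρ _)]
      exact hc _ ((hγ.dist_left (Ioc_subset_Icc_self ht)).trans_le ht.2)
  simpa [abs_of_nonneg (dist_nonneg (x := x) (y := y))] using this

lemma mul_min_le_confDistWrt (hX : GeodesicSpaceWrt (distFun X)) (hρ₀ : ∀ p, 0 ≤ ρ p)
    (hρ : Continuous ρ) {x : X} {r c : ℝ} (hr : 0 ≤ r) (hc₀ : 0 ≤ c)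
    (hc : ∀ p, dist x p ≤ r → c ≤ ρ p) (y : X) :
    c * min r (dist x y) ≤ confDistWrt (distFun X) ρ x y := by
  rw [confDistWrt_eq_sInf]
  refine le_csInf (confLengths_nonempty hX ρ x y) ?_
  rintro _ ⟨T, γ, hT, hγ, rfl, rfl, rfl⟩
  have hdist : ∀ t ∈ Icc 0 T, dist (γ 0) (γ t) ≤ t := fun t ht => by
    simpa [Real.dist_eq, abs_of_nonneg ht.1] using hγ.dist_le_mul 0 ⟨le_rfl, hT⟩ t ht
  set m := min r T
  have hm : m ∈ Icc 0 T := ⟨le_min hr hT, min_le_right _ _⟩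
  have hcont : ContinuousOn (fun t => ρ (γ t)) (Icc 0 T) := hρ.comp_continuousOn hγ.continuousOn
  calc c * min r (dist (γ 0) (γ T)) ≤ c * m :=
        mul_le_mul_of_nonneg_left (min_le_min le_rfl (hdist T ⟨hT, le_rfl⟩)) hc₀
    _ = ∫ _ in (0:ℝ)..m, c := by simp [mul_comm]
    _ ≤ ∫ t in (0:ℝ)..m, ρ (γ t) :=
        intervalIntegral.integral_mono_on hm.1 intervalIntegrable_const
          ((hcont.mono (Icc_subset_Icc le_rfl hm.2)).intervalIntegrable_of_Icc hm.1)
          fun t ht => hc _ ((hdist t ⟨ht.1, ht.2.trans hm.2⟩).trans (ht.2.trans (min_le_left _ _)))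
    _ ≤ ∫ t in (0:ℝ)..T, ρ (γ t) :=
        intervalIntegral.integral_mono_interval le_rfl hm.1 hm.2
          (Eventually.of_forall fun t => hρ₀ _) (hcont.intervalIntegrable_of_Icc hT)

end ConformalDistance

section BoundaryDistance

variable {e : X → X → ℝ}

def bdryLimits (e : X → X → ℝ) (x : X) : Set ℝ :=
  { r : ℝ | ∃ u : ℕ → X, CauchyWrt e u ∧ ¬ ConvWrt e u ∧
    Tendsto (fun n => e x (u n)) atTop (𝓝 r) }

lemma bdryDistWrt_le (he : ∀ p q, 0 ≤ e p q) {x : X} {r : ℝ} (hr : r ∈ bdryLimits e x) :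
    bdryDistWrt e x ≤ r :=
  csInf_le ⟨0, fun _ ⟨_, _, _, hu⟩ => ge_of_tendsto' hu fun _ => he _ _⟩ hr

lemma le_bdryDistWrt {x : X} {c : ℝ} (hne : (bdryLimits e x).Nonempty)
    (h : ∀ u, CauchyWrt e u → ¬ ConvWrt e u → ∀ᶠ n in atTop, c ≤ e x (u n)) :
    c ≤ bdryDistWrt e x :=
  le_csInf hne fun _ ⟨u, hu, hu', hr⟩ => ge_of_tendsto hr (h u hu hu')

lemma CauchyWrt.exists_tendsto (he : ∀ p q r, e p r ≤ e p q + e q r) {u : ℕ → X}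
    (hu : CauchyWrt e u) (x : X) : ∃ r, Tendsto (fun n => e x (u n)) atTop (𝓝 r) := by
  refine cauchySeq_tendsto_of_complete (Metric.cauchySeq_iff.2 fun η hη => ?_)
  obtain ⟨N, hN⟩ := hu η hη
  refine ⟨N, fun m hm n hn => ?_⟩
  rw [Real.dist_eq, abs_sub_lt_iff]
  constructor <;> linarith [he x (u n) (u m), he x (u m) (u n), hN m hm n hn, hN n hn m hm]

lemma CauchyWrt.convWrt_of_subseq (he₀ : ∀ p q, 0 ≤ e p q)
    (he : ∀ p q r, e p r ≤ e p q + e q r) {u : ℕ → X} (hu : CauchyWrt e u) {φ : ℕ → ℕ}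
    (hφ : StrictMono φ) {y : X} (hy : Tendsto (fun n => e (u (φ n)) y) atTop (𝓝 0)) :
    ConvWrt e u := by
  refine ⟨y, tendsto_order.2 ⟨fun a ha => Eventually.of_forall fun n => ha.trans_le (he₀ _ _),
    fun η hη => ?_⟩⟩
  obtain ⟨N, hN⟩ := hu (η / 2) (half_pos hη)
  obtain ⟨k, hk, hkN⟩ := ((tendsto_order.1 hy).2 (η / 2) (half_pos hη)).and
    (hφ.tendsto_atTop.eventually_ge_atTop N) |>.exists
  exact eventually_atTop.2 ⟨N, fun n hn =>
    (he _ _ _).trans_lt (by linarith [hN n hn (φ k) hkN])⟩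

end BoundaryDistance

section UniformizationDensity

variable {b : X → ℝ} {ε : ℝ}

lemma uniformizationDensity_pos (b : X → ℝ) (ε : ℝ) (p : X) :
    0 < uniformizationDensity b ε p :=
  exp_pos _

lemma uniformizationDensity_nonneg (b : X → ℝ) (ε : ℝ) (p : X) :
    0 ≤ uniformizationDensity b ε p :=
  (uniformizationDensity_pos b ε p).le

variable [MetricSpace X]

lemma continuous_uniformizationDensity (hb : LipschitzWith 1 b) :
    Continuous (uniformizationDensity b ε) :=
  continuous_exp.comp (continuous_const.mul hb.continuous)

lemma uniformizationDensity_le_of_dist_le (hb : LipschitzWith 1 b) (hε : 0 ≤ ε) {p q : X}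
    {r : ℝ} (h : dist p q ≤ r) :
    uniformizationDensity b ε q ≤ exp (ε * r) * uniformizationDensity b ε p := by
  have hpq : b p - b q ≤ r := by
    have := hb.dist_le_mul p q
    rw [Real.dist_eq, NNReal.coe_one, one_mul] at this
    linarith [le_abs_self (b p - b q)]
  rw [uniformizationDensity, uniformizationDensity, ← exp_add]
  exact exp_le_exp.2 (by nlinarith)

lemma le_uniformizationDensity_of_dist_le (hb : LipschitzWith 1 b) (hε : 0 ≤ ε) {p q : X}
    {r : ℝ} (h : dist p q ≤ r) :
    exp (-(ε * r)) * uniformizationDensity b ε p ≤ uniformizationDensity b ε q := by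
  rw [exp_neg, inv_mul_le_iff₀ (exp_pos _)]
  exact uniformizationDensity_le_of_dist_le hb hε (by rwa [dist_comm])

lemma confDistWrt_le_of_dist_le (hX : GeodesicSpaceWrt (distFun X)) (hb : LipschitzWith 1 b)
    (hε : 0 ≤ ε) {y z : X} {r : ℝ} (hyz : dist y z ≤ r) :
    confDistWrt (distFun X) (uniformizationDensity b ε) y z ≤
      exp (ε * r) * uniformizationDensity b ε y * dist y z :=
  confDistWrt_le_mul_dist hX (uniformizationDensity_nonneg b ε) fun _ hp =>
    uniformizationDensity_le_of_dist_le hb hε (hp.trans hyz)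

lemma exp_neg_mul_min_le_confDistWrt (hX : GeodesicSpaceWrt (distFun X))
    (hb : LipschitzWith 1 b) (hε : 0 ≤ ε) (y z : X) :
    exp (-ε) * uniformizationDensity b ε y * min 1 (dist y z) ≤
      confDistWrt (distFun X) (uniformizationDensity b ε) y z :=
  mul_min_le_confDistWrt hX (uniformizationDensity_nonneg b ε)
    (continuous_uniformizationDensity hb) zero_le_one
    (mul_pos (exp_pos _) (uniformizationDensity_pos b ε y)).le
    (fun _ hp => by simpa using le_uniformizationDensity_of_dist_le hb hε hp) z

lemma exp_neg_mul_le_confDistWrt (hX : GeodesicSpaceWrt (distFun X))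
    (hb : LipschitzWith 1 b) (hε : 0 ≤ ε) {y z : X} (hyz : 1 ≤ dist y z) :
    exp (-ε) * uniformizationDensity b ε y ≤
      confDistWrt (distFun X) (uniformizationDensity b ε) y z := by
  simpa [min_eq_left hyz] using exp_neg_mul_min_le_confDistWrt hX hb hε y z

lemma not_convWrt_of_tendsto_dist_atTop (hX : GeodesicSpaceWrt (distFun X))
    (hb : LipschitzWith 1 b) (hε : 0 ≤ ε) {u : ℕ → X} {p : X}
    (hu : Tendsto (fun n => dist p (u n)) atTop atTop) :
    ¬ ConvWrt (confDistWrt (distFun X) (uniformizationDensity b ε)) u := by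
  rintro ⟨y, hy⟩
  have hfar : ∀ᶠ n in atTop, 1 ≤ dist y (u n) :=
    (hu.eventually_ge_atTop (1 + dist p y)).mono fun n hn => by
      linarith [dist_triangle p y (u n)]
  have hlow := ge_of_tendsto hy <| hfar.mono fun n hn => by
    rw [confDistWrt_comm]
    exact exp_neg_mul_le_confDistWrt hX hb hε hn
  linarith [mul_pos (exp_pos (-ε)) (uniformizationDensity_pos b ε y)]

lemma tendsto_confDistWrt_zero (hX : GeodesicSpaceWrt (distFun X)) (hb : LipschitzWith 1 b)
    (hε : 0 ≤ ε) {w : ℕ → X} {y : X} (hw : Tendsto w atTop (𝓝 y)) :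
    Tendsto (fun n => confDistWrt (distFun X) (uniformizationDensity b ε) (w n) y)
      atTop (𝓝 0) := by
  have hd : Tendsto (fun n => dist y (w n)) atTop (𝓝 0) := by
    simpa only [dist_comm] using tendsto_iff_dist_tendsto_zero.1 hw
  refine squeeze_zero' (Eventually.of_forall fun n =>
    confDistWrt_nonneg (uniformizationDensity_nonneg b ε) _ _) ?_
    (by simpa using hd.const_mul (exp ε * uniformizationDensity b ε y))
  filter_upwards [hd.eventually (ge_mem_nhds zero_lt_one)] with n hn
  rw [confDistWrt_comm]
  simpa using confDistWrt_le_of_dist_le hX hb hε hn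

lemma eventually_one_le_dist_of_not_convWrt [ProperSpace X] (hX : GeodesicSpaceWrt (distFun X))
    (hb : LipschitzWith 1 b) (hε : 0 ≤ ε) {u : ℕ → X}
    (hu : CauchyWrt (confDistWrt (distFun X) (uniformizationDensity b ε)) u)
    (hu' : ¬ ConvWrt (confDistWrt (distFun X) (uniformizationDensity b ε)) u) (x : X) :
    ∀ᶠ n in atTop, 1 ≤ dist x (u n) := by
  by_contra h
  have hfreq : ∃ᶠ n in atTop, u n ∈ closedBall x 1 :=
    (not_eventually.1 h).mono fun n hn => mem_closedBall'.2 (not_le.1 hn).le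
  obtain ⟨y, -, φ, hφ, hy⟩ := (isCompact_closedBall x 1).tendsto_subseq' hfreq
  exact hu' (hu.convWrt_of_subseq (confDistWrt_nonneg (uniformizationDensity_nonneg b ε))
    (confDistWrt_triangle hX (uniformizationDensity_nonneg b ε)
      (continuous_uniformizationDensity hb)) hφ (tendsto_confDistWrt_zero hX hb hε hy))

lemma exp_neg_mul_le_bdryDistWrt [ProperSpace X] (hX : GeodesicSpaceWrt (distFun X))
    (hb : LipschitzWith 1 b) (hε : 0 ≤ ε) {x : X}
    (hne : (bdryLimits (confDistWrt (distFun X) (uniformizationDensity b ε)) x).Nonempty) :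
    exp (-ε) * uniformizationDensity b ε x ≤
      bdryDistWrt (confDistWrt (distFun X) (uniformizationDensity b ε)) x :=
  le_bdryDistWrt hne fun _ hu hu' => (eventually_one_le_dist_of_not_convWrt hX hb hε hu hu' x).mono
    fun _ hn => exp_neg_mul_le_confDistWrt hX hb hε hn

end UniformizationDensity

section Hyperbolic

variable [MetricSpace X] {δ : ℝ}

lemma IsGeodesicRayWrt.dist_zero {σ : ℝ → X} (hσ : IsGeodesicRayWrt (distFun X) σ) {t : ℝ}
    (ht : 0 ≤ t) : dist (σ 0) (σ t) = t := by
  simpa [abs_of_nonneg ht] using hσ 0 self_mem_Ici t ht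

lemma IsGeodesicRayWrt.continuousOn {σ : ℝ → X} (hσ : IsGeodesicRayWrt (distFun X) σ) :
    ContinuousOn σ (Ici 0) :=
  (forall_dist_le_abs_iff_lipschitzOnWith.1 fun s hs t ht => (hσ s hs t ht).le).continuousOn

lemma IsGeodesicRayWrt.comp_add {σ : ℝ → X} (hσ : IsGeodesicRayWrt (distFun X) σ) {a : ℝ}
    (ha : 0 ≤ a) : IsGeodesicRayWrt (distFun X) fun t => σ (a + t) := fun s hs t ht => by
  simpa using hσ (a + s) (mem_Ici.2 (by linarith [mem_Ici.1 hs]))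
    (a + t) (mem_Ici.2 (by linarith [mem_Ici.1 ht]))

lemma IsGeodesicRayWrt.isGeodesicSegWrt {σ : ℝ → X} (hσ : IsGeodesicRayWrt (distFun X) σ)
    {T : ℝ} (hT : 0 ≤ T) : IsGeodesicSegWrt (distFun X) σ (σ 0) (σ T) := by
  exact ⟨rfl, by simp [hσ.dist_zero hT], fun s hs t ht => hσ s hs.1 t ht.1⟩

lemma IsGeodesicLineWrt.isGeodesicRayWrt {γ : ℝ → X} (hγ : IsGeodesicLineWrt (distFun X) γ) :
    IsGeodesicRayWrt (distFun X) γ :=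
  fun s _ t _ => hγ s t

lemma IsGeodesicLineWrt.comp_add {γ : ℝ → X} (hγ : IsGeodesicLineWrt (distFun X) γ) (a : ℝ) :
    IsGeodesicLineWrt (distFun X) fun t => γ (a + t) :=
  fun s t => by simpa using hγ (a + s) (a + t)

lemma IsGeodesicLineWrt.comp_neg {γ : ℝ → X} (hγ : IsGeodesicLineWrt (distFun X) γ) :
    IsGeodesicLineWrt (distFun X) fun t => γ (-t) :=
  fun s t => by rw [hγ (-s) (-t), neg_sub_neg, abs_sub_comm]

/-- `[y, z]` lies in the ball of radius `|yz|` about `y`, so `γ₁ s` is not `δ`-close to it. -/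
lemma DeltaHyperbolicWrt.exists_dist_le_of_far (hhyp : DeltaHyperbolicWrt (distFun X) δ)
    {x y z : X} {γ₁ γ₂ γ₃ : ℝ → X} (h₁ : IsGeodesicSegWrt (distFun X) γ₁ x y)
    (h₂ : IsGeodesicSegWrt (distFun X) γ₂ y z) (h₃ : IsGeodesicSegWrt (distFun X) γ₃ z x)
    {s : ℝ} (hs : s ∈ Icc 0 (dist x y)) (hfar : δ + dist y z < dist (γ₁ s) y) :
    ∃ t ∈ Icc 0 (dist z x), dist (γ₁ s) (γ₃ t) ≤ δ := by
  obtain ⟨q, hq, hpq⟩ := (hhyp x y z γ₁ γ₂ γ₃ h₁ h₂ h₃).1 (γ₁ s) ⟨s, hs, rfl⟩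
  rcases hq with ⟨t, ht, rfl⟩ | ⟨t, ht, rfl⟩
  · have hyt : dist y (γ₂ t) ≤ dist y z := (h₂.dist_left ht).trans_le ht.2
    linarith [dist_triangle (γ₁ s) (γ₂ t) y, dist_comm y (γ₂ t), show dist _ _ ≤ δ from hpq]
  · exact ⟨t, ht, hpq⟩

/-- Two thin triangles, with vertices `σ 0, σ T, γ (-T)` and `γ (-T), σ 0, γ 0` for `T` large. -/
lemma exists_dist_le_of_rayEquiv (hδ : 0 ≤ δ) (hX : GeodesicSpaceWrt (distFun X))
    (hhyp : DeltaHyperbolicWrt (distFun X) δ) {σ γ : ℝ → X}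
    (hσ : IsGeodesicRayWrt (distFun X) σ) (hγ : IsGeodesicLineWrt (distFun X) γ) {c : ℝ}
    (hc : ∀ t, 0 ≤ t → dist (γ (-t)) (σ t) ≤ c) {t : ℝ} (ht : 2 * δ + c < t) :
    ∃ u, 0 ≤ u ∧ dist (σ t) (γ (-u)) ≤ 2 * δ := by
  have hc₀ : 0 ≤ c := dist_nonneg.trans (hc 0 le_rfl)
  have hc₀' : dist (σ 0) (γ 0) ≤ c := by simpa [dist_comm] using hc 0 le_rfl
  set T := t + c + δ + 1
  have hT : 0 ≤ T := by linarith
  obtain ⟨γ₂, h₂⟩ := hX (σ T) (γ (-T))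
  obtain ⟨γ₃, h₃⟩ := hX (γ (-T)) (σ 0)
  obtain ⟨v, hv, hv'⟩ := hhyp.exists_dist_le_of_far (hσ.isGeodesicSegWrt hT) h₂ h₃
    (s := t) (by rw [hσ.dist_zero hT]; constructor <;> linarith) (by
      have h1 := hσ t (mem_Ici.2 (by linarith)) T hT
      rw [distFun_apply, abs_of_nonpos (by linarith)] at h1
      linarith [hc T hT, dist_comm (σ T) (γ (-T))])
  obtain ⟨γ₄, h₄⟩ := hX (σ 0) (γ 0)
  have h₅ : IsGeodesicSegWrt (distFun X) (fun u => γ (-u)) (γ 0) (γ (-T)) := by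
    simpa using hγ.comp_neg.isGeodesicRayWrt.isGeodesicSegWrt hT
  obtain ⟨u, hu, hu'⟩ := hhyp.exists_dist_le_of_far h₃ h₄ h₅ hv (by
    linarith [hσ.dist_zero (show 0 ≤ t by linarith), dist_triangle (σ 0) (γ₃ v) (σ t),
      dist_comm (γ₃ v) (σ t), dist_comm (γ₃ v) (σ 0)])
  exact ⟨u, hu.1, by linarith [dist_triangle (σ t) (γ₃ v) (γ (-u))]⟩

end Hyperbolic

section Busemann

variable [MetricSpace X] {σ : ℝ → X} {δ : ℝ}

lemma busemannWrt_le (hσ : IsGeodesicRayWrt (distFun X) σ) (x : X) {t : ℝ} (ht : 0 ≤ t) :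
    busemannWrt (distFun X) σ x ≤ dist (σ t) x - t := by
  refine csInf_le ⟨-dist (σ 0) x, ?_⟩ ⟨t, ht, rfl⟩
  rintro _ ⟨s, hs, rfl⟩
  show -dist (σ 0) x ≤ dist (σ s) x - s
  linarith [dist_triangle (σ 0) x (σ s), hσ.dist_zero hs, dist_comm x (σ s)]

lemma tendsto_busemannWrt (hσ : IsGeodesicRayWrt (distFun X) σ) (x : X) :
    Tendsto (fun t => dist (σ t) x - t) atTop (𝓝 (busemannWrt (distFun X) σ x)) := by
  refine tendsto_order.2 ⟨fun a ha => (eventually_ge_atTop 0).mono fun t ht =>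
    ha.trans_le (busemannWrt_le hσ x ht), fun a ha => ?_⟩
  obtain ⟨_, ⟨t₀, ht₀, rfl⟩, hlt⟩ := exists_lt_of_csInf_lt (nonempty_Ici.image _) ha
  refine (eventually_ge_atTop t₀).mono fun t ht => lt_of_le_of_lt ?_ hlt
  have h := hσ t (mem_Ici.2 (le_trans ht₀ ht)) t₀ ht₀
  rw [distFun_apply, abs_of_nonneg (by linarith)] at h
  show dist (σ t) x - t ≤ dist (σ t₀) x - t₀
  linarith [dist_triangle (σ t) (σ t₀) x]

lemma busemannWrt_le_add_dist (hσ : IsGeodesicRayWrt (distFun X) σ) (x y : X) :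
    busemannWrt (distFun X) σ x ≤ busemannWrt (distFun X) σ y + dist x y :=
  le_of_tendsto_of_tendsto' (tendsto_busemannWrt hσ x)
    ((tendsto_busemannWrt hσ y).add_const (dist x y)) fun t => by
      linarith [dist_triangle (σ t) y x, dist_comm y x]

lemma busemannWrt_add_sub_le (hδ : 0 ≤ δ) (hX : GeodesicSpaceWrt (distFun X))
    (hhyp : DeltaHyperbolicWrt (distFun X) δ) {γ : ℝ → X}
    (hσ : IsGeodesicRayWrt (distFun X) σ) (hγ : IsGeodesicLineWrt (distFun X) γ)
    (hγσ : RayEquivWrt (distFun X) (fun t => γ (-t)) σ) {s s' : ℝ} (hss' : s ≤ s') :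
    busemannWrt (distFun X) σ (γ s) + (s' - s) - 4 * δ ≤ busemannWrt (distFun X) σ (γ s') := by
  obtain ⟨c, hc⟩ := hγσ
  have hc₀' : dist (σ 0) (γ 0) ≤ c := by simpa [dist_comm] using hc 0 self_mem_Ici
  have key : ∀ᶠ t in atTop,
      s' - s - 4 * δ ≤ (dist (σ t) (γ s') - t) - (dist (σ t) (γ s) - t) := by
    filter_upwards [eventually_gt_atTop (2 * δ + c + |s|)] with t ht
    have ht₀ : 0 ≤ t := by linarith [abs_nonneg s, dist_nonneg.trans hc₀']
    obtain ⟨u, hu, hut⟩ := exists_dist_le_of_rayEquiv hδ hX hhyp hσ hγ hc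
      (by linarith [abs_nonneg s])
    have hu' : t ≤ c + u + 2 * δ := by
      have h := hγ 0 (-u)
      rw [distFun_apply, sub_neg_eq_add, zero_add, abs_of_nonneg hu] at h
      linarith [hσ.dist_zero ht₀,
        dist_triangle4 (σ 0) (γ 0) (γ (-u)) (σ t), dist_comm (γ (-u)) (σ t)]
    have hdist : ∀ r, s ≤ r → dist (γ (-u)) (γ r) = u + r := fun r hr => by
      rw [show dist (γ (-u)) (γ r) = |-u - r| from hγ (-u) r, abs_sub_comm,
        abs_of_nonneg (by linarith [neg_abs_le s])]
      ring
    linarith [hdist s le_rfl, hdist s' hss', dist_triangle (γ (-u)) (σ t) (γ s'),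
      dist_triangle (σ t) (γ (-u)) (γ s), dist_comm (γ (-u)) (σ t)]
  linarith [ge_of_tendsto ((tendsto_busemannWrt hσ (γ s')).sub (tendsto_busemannWrt hσ (γ s)))
    key]

end Busemann

section AscendingRays

variable [MetricSpace X] {b : X → ℝ} {δ K : ℝ}

def IsAscendingRay (b : X → ℝ) (c : ℝ) (g : ℝ → X) : Prop :=
  IsGeodesicRayWrt (distFun X) g ∧ ∀ t t', 0 ≤ t → t ≤ t' → b (g t) + (t' - t) - c ≤ b (g t')

lemma BhatStarlike.lipschitzWith (hbs : BhatStarlike (distFun X) K b) : LipschitzWith 1 b := by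
  rcases hbs with ⟨z, s, hb, -⟩ | ⟨σ, s, hσ, hb, -⟩
  · exact LipschitzWith.of_le_add fun p q => by
      simp only [hb, distFun_apply]
      linarith [dist_triangle p q z]
  · exact LipschitzWith.of_le_add fun p q => by
      simp only [hb]
      linarith [busemannWrt_le_add_dist hσ p q]

lemma exists_dist_lt_of_infDistWrt_le {x : X} {s : Set X} (hs : s.Nonempty)
    (h : infDistWrt (distFun X) x s ≤ K) : ∃ p ∈ s, dist x p < K + 1 := by
  obtain ⟨_, ⟨p, hp, rfl⟩, hlt⟩ := exists_lt_of_csInf_lt (hs.image _) (h.trans_lt (lt_add_one K))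
  exact ⟨p, hp, hlt⟩

lemma BhatStarlike.exists_isAscendingRay (hδ : 0 ≤ δ) (hX : GeodesicSpaceWrt (distFun X))
    (hhyp : DeltaHyperbolicWrt (distFun X) δ) (hbs : BhatStarlike (distFun X) K b) (x : X) :
    ∃ g, IsAscendingRay b (4 * δ) g ∧ dist x (g 0) ≤ K + 1 := by
  rcases hbs with ⟨z, s, hb, hstar⟩ | ⟨σ, s, hσ, hb, hstar⟩
  · obtain ⟨σ, hσ, rfl, hinf⟩ := hstar x
    obtain ⟨_, ⟨a, ha, rfl⟩, hxa⟩ := exists_dist_lt_of_infDistWrt_le (nonempty_Ici.image σ) hinf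
    refine ⟨fun t => σ (a + t), ⟨hσ.comp_add ha, fun t t' ht htt' => ?_⟩, by simpa using hxa.le⟩
    have hdist : ∀ r, 0 ≤ r → dist (σ (a + r)) (σ 0) = a + r := fun r hr => by
      rw [dist_comm, hσ.dist_zero (by linarith [mem_Ici.1 ha])]
    simp only [hb, distFun_apply, hdist t ht, hdist t' (ht.trans htt')]
    linarith
  · obtain ⟨γ, hγ, hγσ, hinf⟩ := hstar x
    obtain ⟨_, ⟨a, rfl⟩, hxa⟩ := exists_dist_lt_of_infDistWrt_le (range_nonempty γ) hinf
    refine ⟨fun t => γ (a + t), ⟨(hγ.comp_add a).isGeodesicRayWrt, fun t t' _ htt' => ?_⟩,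
      by simpa using hxa.le⟩
    have := busemannWrt_add_sub_le hδ hX hhyp hσ hγ hγσ (show a + t ≤ a + t' by linarith)
    simp only [hb]
    linarith

end AscendingRays

lemma integral_exp_neg_mul {ε : ℝ} (hε : ε ≠ 0) (a a' : ℝ) :
    ∫ t in a..a', exp (-ε * t) = (exp (-ε * a) - exp (-ε * a')) / ε := by
  rw [intervalIntegral.integral_comp_mul_left (fun t => exp t) (neg_ne_zero.2 hε), integral_exp,
    smul_eq_mul, inv_neg, div_eq_inv_mul]
  ring

section SubWhitney

variable [MetricSpace X] {b : X → ℝ} {δ K ε : ℝ}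

lemma confDistWrt_ray_le (hb : LipschitzWith 1 b) (hε : 0 < ε) {c : ℝ} {g : ℝ → X}
    (hg : IsAscendingRay b c g) {a a' : ℝ} (ha : 0 ≤ a) (haa' : a ≤ a') :
    confDistWrt (distFun X) (uniformizationDensity b ε) (g a) (g a') ≤
      exp (ε * c) * uniformizationDensity b ε (g 0) * exp (-ε * a) / ε := by
  set ρ := uniformizationDensity b ε
  have hcurve : LipschitzOnWith 1 (fun t => g (a + t)) (Icc 0 (a' - a)) :=
    forall_dist_le_abs_iff_lipschitzOnWith.1 fun s hs t ht =>
      ((hg.1.comp_add ha) s hs.1 t ht.1).le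
  have hint := confDistWrt_le_integral (uniformizationDensity_nonneg b ε)
    (sub_nonneg.2 haa') hcurve
  rw [intervalIntegral.integral_comp_add_left (fun t => ρ (g t))] at hint
  simp only [add_zero, add_sub_cancel] at hint
  have hpt : ∀ t ∈ Icc a a', ρ (g t) ≤ exp (ε * c) * ρ (g 0) * exp (-ε * t) := fun t ht => by
    have := hg.2 0 t le_rfl (ha.trans ht.1)
    simp only [ρ, uniformizationDensity, ← exp_add]
    exact exp_le_exp.2 (by nlinarith)
  have hcont : ContinuousOn (fun t => ρ (g t)) (Icc a a') :=
    (continuous_uniformizationDensity hb).comp_continuousOn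
      (hg.1.continuousOn.mono fun t ht => ha.trans ht.1)
  calc _ ≤ ∫ t in a..a', ρ (g t) := hint
    _ ≤ ∫ t in a..a', exp (ε * c) * ρ (g 0) * exp (-ε * t) :=
      intervalIntegral.integral_mono_on haa' (hcont.intervalIntegrable_of_Icc haa')
        ((by fun_prop : Continuous fun t => exp (ε * c) * ρ (g 0) * exp (-ε * t)).intervalIntegrable
          _ _) hpt
    _ = exp (ε * c) * ρ (g 0) * ((exp (-ε * a) - exp (-ε * a')) / ε) := by
      rw [intervalIntegral.integral_const_mul, integral_exp_neg_mul hε.ne']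
    _ ≤ _ := by
      rw [mul_div_assoc]
      exact mul_le_mul_of_nonneg_left
        (div_le_div_of_nonneg_right (by linarith [exp_pos (-ε * a')]) hε.le)
        (mul_nonneg (exp_pos _).le (uniformizationDensity_pos b ε _).le)

/-- `ρ` decays exponentially along the ray, so the points `g n` form a Cauchy sequence for the
conformal distance; it has no limit because `g n` leaves every bounded set. -/
lemma exists_mem_bdryLimits_le (hX : GeodesicSpaceWrt (distFun X)) (hb : LipschitzWith 1 b)
    (hε : 0 < ε) {c : ℝ} {g : ℝ → X} (hg : IsAscendingRay b c g) (x : X) :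
    ∃ r ∈ bdryLimits (confDistWrt (distFun X) (uniformizationDensity b ε)) x,
      r ≤ confDistWrt (distFun X) (uniformizationDensity b ε) x (g 0) +
        exp (ε * c) * uniformizationDensity b ε (g 0) / ε := by
  set E := confDistWrt (distFun X) (uniformizationDensity b ε)
  set Q := exp (ε * c) * uniformizationDensity b ε (g 0) / ε
  have htri := confDistWrt_triangle hX (uniformizationDensity_nonneg b ε)
    (continuous_uniformizationDensity hb)
  have htail : ∀ m n : ℕ, m ≤ n → E (g m) (g n) ≤ Q * exp (-ε * m) := fun m n hmn =>
    (confDistWrt_ray_le hb hε hg m.cast_nonneg (Nat.cast_le.2 hmn)).trans_eq (by ring)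
  have hcauchy : CauchyWrt E fun n => g n := by
    intro η hη
    have hlim : Tendsto (fun n : ℕ => Q * exp (-ε * n)) atTop (𝓝 0) := by
      simpa [neg_mul] using (tendsto_exp_neg_atTop_nhds_zero.comp
        (tendsto_natCast_atTop_atTop.const_mul_atTop hε)).const_mul Q
    obtain ⟨N, hN⟩ := eventually_atTop.1 ((tendsto_order.1 hlim).2 η hη)
    have hsmall : ∀ m n : ℕ, N ≤ m → m ≤ n → E (g m) (g n) < η := fun m n hm hmn =>
      (htail m n hmn).trans_lt <| lt_of_le_of_lt (mul_le_mul_of_nonneg_left (exp_le_exp.2 <| by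
        nlinarith [(Nat.cast_le (α := ℝ)).2 hm]) (div_pos (mul_pos (exp_pos _)
          (uniformizationDensity_pos b ε _)) hε).le) (hN N le_rfl)
    refine ⟨N, fun m hm n hn => ?_⟩
    rcases le_total m n with h | h
    · exact hsmall m n hm h
    · exact (confDistWrt_comm (g m) (g n)).trans_lt (hsmall n m hn h)
  have hnconv : ¬ ConvWrt E fun n => g n :=
    not_convWrt_of_tendsto_dist_atTop hX hb hε.le (p := g 0)
      (tendsto_natCast_atTop_atTop.congr fun n => (hg.1.dist_zero n.cast_nonneg).symm)
  obtain ⟨r, hr⟩ := hcauchy.exists_tendsto htri x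
  refine ⟨r, ⟨_, hcauchy, hnconv, hr⟩, le_of_tendsto' hr fun n =>
    (htri x (g 0) (g n)).trans (add_le_add le_rfl ?_)⟩
  simpa using htail 0 n n.zero_le

/-- The bound for `d_ε(x, g 0) + ∫_g ρ` along the ray `g` given by
`BhatStarlike.exists_isAscendingRay`, in units of `ρ x`. -/
def bdryConst (δ K ε : ℝ) : ℝ := exp (ε * (K + 1)) * (K + 1 + exp (ε * (4 * δ)) / ε)

lemma one_le_bdryConst (hK : 0 ≤ K) (hε : 0 < ε) : 1 ≤ bdryConst δ K ε :=
  one_le_mul_of_one_le_of_one_le (one_le_exp (by positivity))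
    (by linarith [div_pos (exp_pos (ε * (4 * δ))) hε])

lemma BhatStarlike.bdryLimits_nonempty_and_bdryDistWrt_le (hδ : 0 ≤ δ) (hε : 0 < ε)
    (hX : GeodesicSpaceWrt (distFun X)) (hhyp : DeltaHyperbolicWrt (distFun X) δ)
    (hbs : BhatStarlike (distFun X) K b) (x : X) :
    (bdryLimits (confDistWrt (distFun X) (uniformizationDensity b ε)) x).Nonempty ∧
      bdryDistWrt (confDistWrt (distFun X) (uniformizationDensity b ε)) x ≤
        bdryConst δ K ε * uniformizationDensity b ε x := by
  have hb := hbs.lipschitzWith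
  obtain ⟨g, hg, hxg⟩ := hbs.exists_isAscendingRay hδ hX hhyp x
  obtain ⟨r, hr, hrle⟩ := exists_mem_bdryLimits_le hX hb hε hg x
  refine ⟨⟨r, hr⟩, (bdryDistWrt_le (confDistWrt_nonneg (uniformizationDensity_nonneg b ε))
    hr).trans (hrle.trans ?_)⟩
  have hρx := uniformizationDensity_pos b ε x
  calc _ ≤ exp (ε * (K + 1)) * uniformizationDensity b ε x * (K + 1) +
        exp (ε * (4 * δ)) * (exp (ε * (K + 1)) * uniformizationDensity b ε x) / ε := by
        gcongr
        · exact (confDistWrt_le_of_dist_le hX hb hε.le hxg).trans (by gcongr)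
        · exact uniformizationDensity_le_of_dist_le hb hε.le hxg
    _ = bdryConst δ K ε * uniformizationDensity b ε x := by
      unfold bdryConst
      ring

lemma dist_lt_half_of_confDistWrt_lt (hX : GeodesicSpaceWrt (distFun X))
    (hb : LipschitzWith 1 b) (hε : 0 ≤ ε) {A D : ℝ} (hA : 0 < A) {x w : X}
    (hD : D ≤ A * uniformizationDensity b ε x)
    (hw : confDistWrt (distFun X) (uniformizationDensity b ε) x w < exp (-ε) / (2 * A) * D) :
    dist x w < 1 / 2 := by
  have hρx := uniformizationDensity_pos b ε x
  have hmin : exp (-ε) * uniformizationDensity b ε x * min 1 (dist x w) <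
      exp (-ε) * uniformizationDensity b ε x * (1 / 2) :=
    calc _ ≤ confDistWrt (distFun X) (uniformizationDensity b ε) x w :=
          exp_neg_mul_min_le_confDistWrt hX hb hε x w
      _ < exp (-ε) / (2 * A) * D := hw
      _ ≤ exp (-ε) / (2 * A) * (A * uniformizationDensity b ε x) := by gcongr
      _ = _ := by field_simp
  exact (min_lt_iff.1 (lt_of_mul_lt_mul_left hmin (by positivity))).resolve_left (by norm_num)

lemma confDistWrt_comparable_mul_dist (hX : GeodesicSpaceWrt (distFun X))
    (hb : LipschitzWith 1 b) (hε : 0 ≤ ε) {A D : ℝ} (hA : 1 ≤ A) {x y z : X}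
    (hDlow : exp (-ε) * uniformizationDensity b ε x ≤ D)
    (hDup : D ≤ A * uniformizationDensity b ε x) (hxy : dist x y ≤ 1) (hyz : dist y z ≤ 1) :
    (A * exp ε ^ 3)⁻¹ * (D * dist y z) ≤
        confDistWrt (distFun X) (uniformizationDensity b ε) y z ∧
      confDistWrt (distFun X) (uniformizationDensity b ε) y z ≤ A * exp ε ^ 3 * (D * dist y z) := by
  set E := confDistWrt (distFun X) (uniformizationDensity b ε) y z
  set ρ := uniformizationDensity b ε
  have he : 1 ≤ exp ε := one_le_exp hε
  have hE₀ : 0 ≤ E := confDistWrt_nonneg (uniformizationDensity_nonneg b ε) y z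
  have hElow : ρ y * dist y z ≤ exp ε * E := by
    have := exp_neg_mul_min_le_confDistWrt hX hb hε y z
    rw [min_eq_right hyz, exp_neg] at this
    rwa [mul_assoc, inv_mul_le_iff₀ (exp_pos ε)] at this
  have hEup : E ≤ exp ε * ρ y * dist y z := by
    simpa using confDistWrt_le_of_dist_le hX hb hε hyz
  have hρy : ρ y ≤ exp ε * ρ x := by simpa using uniformizationDensity_le_of_dist_le hb hε hxy
  have hρx : ρ x ≤ exp ε * ρ y := by
    have hyx : dist y x ≤ 1 := by rwa [dist_comm]
    simpa using uniformizationDensity_le_of_dist_le hb hε hyx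
  have hρD : ρ x ≤ exp ε * D := by
    rwa [exp_neg, inv_mul_le_iff₀ (exp_pos ε)] at hDlow
  have hd := dist_nonneg (x := y) (y := z)
  have hA₀ : 0 ≤ A := by linarith
  constructor
  · rw [inv_mul_le_iff₀ (mul_pos (by linarith) (pow_pos (exp_pos ε) 3))]
    calc D * dist y z ≤ A * (exp ε * ρ y) * dist y z :=
          mul_le_mul_of_nonneg_right (hDup.trans (mul_le_mul_of_nonneg_left hρx hA₀)) hd
      _ = A * exp ε * (ρ y * dist y z) := by ring
      _ ≤ A * exp ε * (exp ε * E) :=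
          mul_le_mul_of_nonneg_left hElow (mul_nonneg hA₀ (exp_pos ε).le)
      _ = A * exp ε ^ 2 * E := by ring
      _ ≤ A * exp ε ^ 3 * E := mul_le_mul_of_nonneg_right
          (mul_le_mul_of_nonneg_left (pow_le_pow_right₀ he (by norm_num)) hA₀) hE₀
  · have hDd : 0 ≤ D * dist y z :=
      mul_nonneg ((mul_pos (exp_pos _) (uniformizationDensity_pos b ε x)).le.trans hDlow) hd
    calc E ≤ exp ε * ρ y * dist y z := hEup
      _ ≤ exp ε * (exp ε * (exp ε * D)) * dist y z := by
          gcongr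
          exact hρy.trans (by gcongr)
      _ = 1 * exp ε ^ 3 * (D * dist y z) := by ring
      _ ≤ A * exp ε ^ 3 * (D * dist y z) := by gcongr

theorem BhatStarlike.subWhitney [ProperSpace X] (hδ : 0 ≤ δ) (hK : 0 ≤ K) (hε : 0 < ε)
    (hX : GeodesicSpaceWrt (distFun X)) (hhyp : DeltaHyperbolicWrt (distFun X) δ)
    (hbs : BhatStarlike (distFun X) K b) {x y z : X}
    (hy : confDistWrt (distFun X) (uniformizationDensity b ε) x y <
      exp (-ε) / (2 * bdryConst δ K ε) *
        bdryDistWrt (confDistWrt (distFun X) (uniformizationDensity b ε)) x)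
    (hz : confDistWrt (distFun X) (uniformizationDensity b ε) x z <
      exp (-ε) / (2 * bdryConst δ K ε) *
        bdryDistWrt (confDistWrt (distFun X) (uniformizationDensity b ε)) x) :
    dist y z ≤ 1 ∧
      (bdryConst δ K ε * exp ε ^ 3)⁻¹ *
          (bdryDistWrt (confDistWrt (distFun X) (uniformizationDensity b ε)) x * dist y z) ≤
        confDistWrt (distFun X) (uniformizationDensity b ε) y z ∧
      confDistWrt (distFun X) (uniformizationDensity b ε) y z ≤ bdryConst δ K ε * exp ε ^ 3 *
          (bdryDistWrt (confDistWrt (distFun X) (uniformizationDensity b ε)) x * dist y z) := by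
  have hb := hbs.lipschitzWith
  have hA := one_le_bdryConst (δ := δ) hK hε
  obtain ⟨hne, hDup⟩ := hbs.bdryLimits_nonempty_and_bdryDistWrt_le hδ hε hX hhyp x
  have hxy := dist_lt_half_of_confDistWrt_lt hX hb hε.le (by linarith) hDup hy
  have hxz := dist_lt_half_of_confDistWrt_lt hX hb hε.le (by linarith) hDup hz
  have hyz : dist y z ≤ 1 := by linarith [dist_triangle_left y z x]
  exact ⟨hyz, confDistWrt_comparable_mul_dist hX hb hε.le hA
    (exp_neg_mul_le_bdryDistWrt hX hb hε.le hne) hDup (by linarith) hyz⟩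

end SubWhitney

theorem statement19_general (δ K ε M : ℝ) (hδ : 0 ≤ δ) (hK : 0 ≤ K) (hε : 0 < ε) :
    ∃ lam C : ℝ, 0 < lam ∧ lam < 1 ∧ 1 ≤ C ∧
      ∀ (X : Type*) [MetricSpace X] [ProperSpace X],
        GeodesicSpaceWrt (distFun X) → DeltaHyperbolicWrt (distFun X) δ →
        ∀ b : X → ℝ, BhatStarlike (distFun X) K b →
          IsGHDensityWrt (distFun X) M (uniformizationDensity b ε) →
          ∀ x y z : X,
            confDistWrt (distFun X) (uniformizationDensity b ε) x y <
              lam * bdryDistWrt (confDistWrt (distFun X) (uniformizationDensity b ε)) x →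
            confDistWrt (distFun X) (uniformizationDensity b ε) x z <
              lam * bdryDistWrt (confDistWrt (distFun X) (uniformizationDensity b ε)) x →
            dist y z ≤ 1 ∧
            C⁻¹ * (bdryDistWrt (confDistWrt (distFun X) (uniformizationDensity b ε)) x *
                dist y z) ≤
              confDistWrt (distFun X) (uniformizationDensity b ε) y z ∧
            confDistWrt (distFun X) (uniformizationDensity b ε) y z ≤
              C * (bdryDistWrt (confDistWrt (distFun X) (uniformizationDensity b ε)) x *
                dist y z) := by
  have hA := one_le_bdryConst (δ := δ) hK hε
  refine ⟨exp (-ε) / (2 * bdryConst δ K ε), bdryConst δ K ε * exp ε ^ 3,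
    div_pos (exp_pos _) (by linarith), ?_, ?_, ?_⟩
  · rw [div_lt_one (by linarith)]
    linarith [exp_lt_one_iff.2 (neg_lt_zero.2 hε)]
  · exact one_le_mul_of_one_le_of_one_le hA (one_le_pow₀ (one_le_exp hε.le))
  · intro X _ _ hX hhyp b hbs _ x y z hy hz
    exact hbs.subWhitney hδ hK hε hX hhyp hy hz

/-- (Sub-Whitney balls.) There is `0 < λ < 1` depending only on
`δ, K, ε, M` such that for all `y, z` in the ball of radius `λ·d_{ε,b}(x)` around `x` in
the metric `d_{ε,b}`, one has `d(y,z) ≤ 1` and `d_{ε,b}(y,z) ≍_C d_{ε,b}(x)·d(y,z)` with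
`C = C(δ,K,ε,M)`. -/
theorem statement19 (δ K ε M : ℝ) (hδ : 0 ≤ δ) (hK : 0 ≤ K) (hε : 0 < ε) (hM : 1 ≤ M) :
    ∃ lam C : ℝ, 0 < lam ∧ lam < 1 ∧ 1 ≤ C ∧
      ∀ (X : Type*) [MetricSpace X] [ProperSpace X],
        GeodesicSpaceWrt (distFun X) → DeltaHyperbolicWrt (distFun X) δ →
        ∀ b : X → ℝ, BhatStarlike (distFun X) K b →
          IsGHDensityWrt (distFun X) M (uniformizationDensity b ε) →
          ∀ x y z : X,
            confDistWrt (distFun X) (uniformizationDensity b ε) x y <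
              lam * bdryDistWrt (confDistWrt (distFun X) (uniformizationDensity b ε)) x →
            confDistWrt (distFun X) (uniformizationDensity b ε) x z <
              lam * bdryDistWrt (confDistWrt (distFun X) (uniformizationDensity b ε)) x →
            dist y z ≤ 1 ∧
            C⁻¹ * (bdryDistWrt (confDistWrt (distFun X) (uniformizationDensity b ε)) x *
                dist y z) ≤
              confDistWrt (distFun X) (uniformizationDensity b ε) y z ∧
            confDistWrt (distFun X) (uniformizationDensity b ε) y z ≤
              C * (bdryDistWrt (confDistWrt (distFun X) (uniformizationDensity b ε)) x *
                dist y z) :=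
  statement19_general δ K ε M hδ hK hε

end Paper

end
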